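/- Let Ω ⊆ ℝ^d be open, V ⊆ ℝ, and for i ∈ [N] let f_i : Ω → V be differentiable on Ω. Let Φ : V → ℝ be differentiable on V, strictly increasing, with Φ'(y) > 0 for all y ∈ V. Assume argmin_{θ∈Ω} Σ_{i=1}^N f_i(θ) exists and is unique; denote it θ*, and set w_i := 1/Φ'(f_i(θ*)). Suppose: (i) there is a bounded set S ⊆ Ω with bd(S) ⊆ Ω, θ* ∈ S, and for every i and every θ ∈ Ω∖S, f_i(θ) > f_i(θ*); (ii) for every θ ∈ Ω with θ ≠ θ*, there exists j ∈ [d] such that Σ_{i=1}^N w_i Φ'(f_i(θ)) · (∂f_i/∂θ_j)(θ) ≠ 0. Then argmin_{θ∈Ω} Σ_{i=1}^N w_i Φ(f_i(θ)) exists, is unique, and equals θ* = argmin_{θ∈Ω} Σ_{i=1}^N f_i(θ). -/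

import Mathlib

/-!
The transformed objective `G θ = ∑ i, w i * Φ (f i θ)` is continuous on the compact set
`closure S ⊆ Ω`, so it attains a minimum there; since `Φ` is increasing and the weights are
positive, `G` is no smaller outside `S` than at `θ*`, so that minimum is a global minimum on `Ω`.
A global minimizer in the open set `Ω` is a critical point of `G`, and condition (ii) says exactly
that the gradient of `G` vanishes nowhere but at `θ*`. Hence `θ*` is the only minimizer.
-/

open Set Filter Topology

theorem IsMinOn.lt_of_ne_of_unique {α β : Type*} [LinearOrder β] {g : α → β} {s : Set α} {a : α}
    (ha : IsMinOn g s a) (huniq : ∀ x ∈ s, IsMinOn g s x → x = a) {x : α} (hx : x ∈ s)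
    (hxa : x ≠ a) : g a < g x := by
  refine (ha hx).lt_of_ne fun heq => hxa (huniq x hx fun y hy => ?_)
  rw [← heq]
  exact ha hy

theorem exists_isMinOn_of_closure_of_le_off {X : Type*} [TopologicalSpace X] {g : X → ℝ}
    {Ω S : Set X} {x : X} (hS : IsCompact (closure S)) (hg : ContinuousOn g (closure S))
    (hx : x ∈ S) (hout : ∀ y ∈ Ω \ S, g x ≤ g y) : ∃ x₀ ∈ closure S, IsMinOn g Ω x₀ := by
  obtain ⟨x₀, hx₀, hmin⟩ := hS.exists_isMinOn ⟨x, subset_closure hx⟩ hg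
  refine ⟨x₀, hx₀, fun y hy => ?_⟩
  by_cases hyS : y ∈ closure S
  · exact hmin hyS
  · exact (hmin (subset_closure hx)).trans (hout y ⟨hy, fun h => hyS (subset_closure h)⟩)

theorem eq_of_isMinOn_of_hasFDerivAt_ne_zero {E : Type*} [NormedAddCommGroup E]
    [NormedSpace ℝ E] {g : E → ℝ} {g' : E → E →L[ℝ] ℝ} {Ω : Set E} {x₀ x : E} (hΩ : IsOpen Ω)
    (hg : ∀ y ∈ Ω, HasFDerivAt g (g' y) y) (hcrit : ∀ y ∈ Ω, y ≠ x₀ → g' y ≠ 0) (hx : x ∈ Ω)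
    (hmin : IsMinOn g Ω x) : x = x₀ := by
  by_contra hne
  exact hcrit x hx hne ((hmin.isLocalMin (hΩ.mem_nhds hx)).hasFDerivAt_eq_zero (hg x hx))

theorem hasFDerivAt_sum_mul_comp {E ι : Type*} [NormedAddCommGroup E] [NormedSpace ℝ E]
    [Fintype ι] {Ω : Set E} {V : Set ℝ} {f : ι → E → ℝ} {f' : ι → E →L[ℝ] ℝ} {Φ Φ' : ℝ → ℝ}
    (w : ι → ℝ) {x : E} (hΩ : Ω ∈ 𝓝 x) (hfV : ∀ i, ∀ y ∈ Ω, f i y ∈ V)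
    (hf : ∀ i, HasFDerivAt (f i) (f' i) x) (hΦ : ∀ i, HasDerivWithinAt Φ (Φ' (f i x)) V (f i x)) :
    HasFDerivAt (fun y => ∑ i, w i * Φ (f i y)) (∑ i, (w i * Φ' (f i x)) • f' i) x := by
  refine HasFDerivAt.fun_sum fun i _ => ?_
  have hcomp := ((hΦ i).comp_hasFDerivAt x (hf i)
    (eventually_of_mem hΩ (hfV i))).const_mul (w i)
  simpa only [Function.comp_def, smul_smul] using hcomp

theorem implicit_mle_monotonic_transform_general
    {d N : ℕ}
    (Ω : Set (EuclideanSpace ℝ (Fin d))) (hΩ : IsOpen Ω)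
    (V : Set ℝ)
    (f : Fin N → EuclideanSpace ℝ (Fin d) → ℝ)
    (hfV : ∀ i, ∀ θ ∈ Ω, f i θ ∈ V)
    (hfdiff : ∀ i, DifferentiableOn ℝ (f i) Ω)
    (Φ : ℝ → ℝ) (Φ' : ℝ → ℝ)
    (hΦdiff : ∀ y ∈ V, HasDerivWithinAt Φ (Φ' y) V y)
    (hΦmono : StrictMonoOn Φ V)
    (hΦ'pos : ∀ y ∈ V, 0 < Φ' y)
    (θstar : EuclideanSpace ℝ (Fin d)) (hθstar : θstar ∈ Ω)
    (w : Fin N → ℝ) (hw : ∀ i, w i = 1 / Φ' (f i θstar))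
    (S : Set (EuclideanSpace ℝ (Fin d)))
    (hSsub : S ⊆ Ω) (hSbdd : Bornology.IsBounded S)
    (hSbd : frontier S ⊆ Ω) (hθS : θstar ∈ S)
    (hout : ∀ i, ∀ θ ∈ Ω \ S, f i θstar < f i θ)
    (hgrad : ∀ θ ∈ Ω, θ ≠ θstar → ∃ j : Fin d,
      ∑ i, w i * Φ' (f i θ) * (fderivWithin ℝ (f i) Ω θ (EuclideanSpace.single j 1)) ≠ 0) :
    ∀ θ ∈ Ω, θ ≠ θstar →
      ∑ i, w i * Φ (f i θstar) < ∑ i, w i * Φ (f i θ) := by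
  set G : EuclideanSpace ℝ (Fin d) → ℝ := fun θ => ∑ i, w i * Φ (f i θ)
  set G' : EuclideanSpace ℝ (Fin d) → EuclideanSpace ℝ (Fin d) →L[ℝ] ℝ :=
    fun θ => ∑ i, (w i * Φ' (f i θ)) • fderivWithin ℝ (f i) Ω θ
  have hG : ∀ θ ∈ Ω, HasFDerivAt G (G' θ) θ := fun θ hθ =>
    hasFDerivAt_sum_mul_comp w (hΩ.mem_nhds hθ) hfV
      (fun i => ((hfdiff i θ hθ).hasFDerivWithinAt).hasFDerivAt (hΩ.mem_nhds hθ))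
      (fun i => hΦdiff _ (hfV i θ hθ))
  have hcrit : ∀ θ ∈ Ω, θ ≠ θstar → G' θ ≠ 0 := fun θ hθ hne hzero => by
    obtain ⟨j, hj⟩ := hgrad θ hθ hne
    refine hj ?_
    simpa [G', mul_assoc] using congrArg (· (EuclideanSpace.single j 1)) hzero
  have hw_nonneg : ∀ i, 0 ≤ w i := fun i =>
    hw i ▸ (one_div_pos.mpr (hΦ'pos _ (hfV i θstar hθstar))).le
  have hout_le : ∀ θ ∈ Ω \ S, G θstar ≤ G θ := fun θ hθ =>
    Finset.sum_le_sum fun i _ => mul_le_mul_of_nonneg_left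
      (hΦmono.monotoneOn (hfV i θstar hθstar) (hfV i θ hθ.1) (hout i θ hθ).le) (hw_nonneg i)
  have hK : closure S ⊆ Ω := closure_eq_self_union_frontier S ▸ union_subset hSsub hSbd
  obtain ⟨θ₀, hθ₀, hmin⟩ := exists_isMinOn_of_closure_of_le_off
    hSbdd.isCompact_closure (fun θ hθ => (hG θ (hK hθ)).continuousAt.continuousWithinAt)
    hθS hout_le
  have huniq : ∀ θ ∈ Ω, IsMinOn G Ω θ → θ = θstar := fun θ hθ =>
    eq_of_isMinOn_of_hasFDerivAt_ne_zero hΩ hG hcrit hθ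
  intro θ hθ hne
  exact (huniq θ₀ (hK hθ₀) hmin ▸ hmin).lt_of_ne_of_unique huniq hθ hne

/-- Lemma 1 of the paper, full form.
Let `Ω ⊆ ℝ^d` be open, `V ⊆ ℝ`, and for `i ∈ [N]` let `f i : Ω → V` be differentiable on `Ω`.
Let `Φ : V → ℝ` be differentiable on `V` (with derivative `Φ'`), strictly increasing, with
`Φ' y > 0` for all `y ∈ V`.  Assume `θ*` is the unique minimizer of `∑ i, f i` on `Ω`, and set
`w i := 1 / Φ' (f i θ*)`.  Suppose (i) there is a bounded set `S ⊆ Ω` with `frontier S ⊆ Ω`,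
`θ* ∈ S`, and `f i θ > f i θ*` for every `i` and every `θ ∈ Ω \ S`; and (ii) for every
`θ ∈ Ω` with `θ ≠ θ*` there is a coordinate `j` with
`∑ i, w i * Φ' (f i θ) * ∂(f i)/∂θ_j (θ) ≠ 0`.  Then the minimizer of
`∑ i, w i * Φ (f i θ)` over `Ω` exists, is unique, and equals `θ*`
(equivalently: `θ*` strictly minimizes this objective over `Ω`). -/
theorem implicit_mle_monotonic_transform
    {d N : ℕ}
    (Ω : Set (EuclideanSpace ℝ (Fin d))) (hΩ : IsOpen Ω)
    (V : Set ℝ)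
    (f : Fin N → EuclideanSpace ℝ (Fin d) → ℝ)
    (hfV : ∀ i, ∀ θ ∈ Ω, f i θ ∈ V)
    (hfdiff : ∀ i, DifferentiableOn ℝ (f i) Ω)
    (Φ : ℝ → ℝ) (Φ' : ℝ → ℝ)
    (hΦdiff : ∀ y ∈ V, HasDerivWithinAt Φ (Φ' y) V y)
    (hΦmono : StrictMonoOn Φ V)
    (hΦ'pos : ∀ y ∈ V, 0 < Φ' y)
    (θstar : EuclideanSpace ℝ (Fin d)) (hθstar : θstar ∈ Ω)
    (hmin : ∀ θ ∈ Ω, θ ≠ θstar → ∑ i, f i θstar < ∑ i, f i θ)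
    (w : Fin N → ℝ) (hw : ∀ i, w i = 1 / Φ' (f i θstar))
    (S : Set (EuclideanSpace ℝ (Fin d)))
    (hSsub : S ⊆ Ω) (hSbdd : Bornology.IsBounded S)
    (hSbd : frontier S ⊆ Ω) (hθS : θstar ∈ S)
    (hout : ∀ i, ∀ θ ∈ Ω \ S, f i θstar < f i θ)
    (hgrad : ∀ θ ∈ Ω, θ ≠ θstar → ∃ j : Fin d,
      ∑ i, w i * Φ' (f i θ) * (fderivWithin ℝ (f i) Ω θ (EuclideanSpace.single j 1)) ≠ 0) :
    ∀ θ ∈ Ω, θ ≠ θstar →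
      ∑ i, w i * Φ (f i θstar) < ∑ i, w i * Φ (f i θ) :=
  implicit_mle_monotonic_transform_general Ω hΩ V f hfV hfdiff Φ Φ' hΦdiff hΦmono hΦ'pos θstar
    hθstar w hw S hSsub hSbdd hSbd hθS hout hgrad
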